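/- Define ξ₀(r) = r - 2iη₀(1 - (1+r³)^{-1/6}) for r > 0, with 0 < η₀ < 1, and f(r) = 1/ξ₀'(r). Then for all r > 0: Re(f(r)²) ≥ (1/4)(1 - r⁴(1+r³)^{-7/3}) and Im(f(r)²) ≥ (η₀/2) r²(1+r³)^{-7/6}. -/

import Mathlib

open Real

/-!
Writing `a = r²(1+r³)^{-7/6}`, one has `ξ₀'(r) = 1 - iη₀a` with `0 ≤ η₀a ≤ a ≤ 1`, so
`f² = (1 + ib)² / (1 + b²)²` with `b = η₀a ∈ [0, 1]`; the bounds follow from `(1 + b²)² ≤ 4`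
and `b² ≤ a²`.
-/

namespace Complex

theorem re_im_inv_one_sub_mul_I_sq (b : ℝ) :
    ((1 - b * I)⁻¹ ^ 2).re = (1 - b ^ 2) / (1 + b ^ 2) ^ 2 ∧
    ((1 - b * I)⁻¹ ^ 2).im = 2 * b / (1 + b ^ 2) ^ 2 := by
  have hsq : (1 - b * I) ^ 2 = ⟨1 - b ^ 2, -(2 * b)⟩ := by
    apply Complex.ext <;> simp [pow_two]; ring
  have hnormSq : normSq ⟨1 - b ^ 2, -(2 * b)⟩ = (1 + b ^ 2) ^ 2 := by
    simp only [normSq_apply]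
    ring
  rw [inv_pow, hsq, inv_re, inv_im, hnormSq]
  exact ⟨rfl, by rw [neg_neg]⟩

theorem le_re_im_inv_one_sub_mul_I_sq {b : ℝ} (hb₀ : 0 ≤ b) (hb₁ : b ≤ 1) :
    (1 - b ^ 2) / 4 ≤ ((1 - b * I)⁻¹ ^ 2).re ∧ b / 2 ≤ ((1 - b * I)⁻¹ ^ 2).im := by
  obtain ⟨hre, him⟩ := re_im_inv_one_sub_mul_I_sq b
  have hb2 : b ^ 2 ≤ 1 := by nlinarith
  have hden : (1 + b ^ 2) ^ 2 ≤ 4 := by nlinarith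
  rw [hre, him]
  constructor
  · exact div_le_div_of_nonneg_left (by nlinarith) (by positivity) hden
  · calc b / 2 = 2 * b / 4 := by ring
      _ ≤ 2 * b / (1 + b ^ 2) ^ 2 := div_le_div_of_nonneg_left (by linarith) (by positivity) hden

end Complex

theorem sq_mul_one_add_cube_rpow_le_one {r : ℝ} (hr : 0 ≤ r) :
    r ^ 2 * (1 + r ^ 3) ^ (-(7 : ℝ) / 6) ≤ 1 := by
  have hx : 1 ≤ 1 + r ^ 3 := le_add_of_nonneg_right (by positivity)
  have hr2 : r ^ 2 ≤ (1 + r ^ 3) ^ ((7 : ℝ) / 6) :=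
    calc r ^ 2 = (r ^ 3) ^ ((2 : ℝ) / 3) := by
          rw [← rpow_natCast, ← rpow_natCast, ← rpow_mul hr]; norm_num
      _ ≤ (1 + r ^ 3) ^ ((2 : ℝ) / 3) := by gcongr; linarith
      _ ≤ (1 + r ^ 3) ^ ((7 : ℝ) / 6) := rpow_le_rpow_of_exponent_le hx (by norm_num)
  rw [neg_div, rpow_neg (by linarith), ← div_eq_mul_inv]
  exact div_le_one_of_le₀ hr2 (by positivity)

theorem hasDerivAt_translation_deformation (η : ℝ) {r : ℝ} (hr : 1 + r ^ 3 ≠ 0) :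
    HasDerivAt
      (fun t : ℝ => (t : ℂ) - 2 * Complex.I * (η : ℂ) * ((1 - (1 + t ^ 3) ^ (-(1 : ℝ) / 6) : ℝ) : ℂ))
      (1 - ((η * (r ^ 2 * (1 + r ^ 3) ^ (-(7 : ℝ) / 6)) : ℝ) : ℂ) * Complex.I) r := by
  have hcube : HasDerivAt (fun t : ℝ => 1 + t ^ 3) (3 * r ^ 2) r := by
    simpa using (hasDerivAt_pow 3 r).const_add 1
  have hreal := ((hcube.rpow_const (p := -(1 : ℝ) / 6) (Or.inl hr)).const_sub 1).ofReal_comp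
  refine (Complex.ofRealCLM.hasDerivAt.sub
    (hreal.const_mul (2 * Complex.I * (η : ℂ)))).congr_deriv ?_
  rw [show -(1 : ℝ) / 6 - 1 = -(7 : ℝ) / 6 by norm_num, Complex.ofRealCLM_apply]
  push_cast
  ring

theorem stmt4 (η₀ : ℝ) (hη₀ : 0 < η₀) (hη₁ : η₀ < 1) (r : ℝ) (hr : 0 < r) :
    let ξ₀ : ℝ → ℂ := fun t =>
      (t : ℂ) - 2 * Complex.I * (η₀ : ℂ) * (((1 - (1 + t^3) ^ (-(1:ℝ)/6) : ℝ)) : ℂ)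
    let f : ℝ → ℂ := fun t => 1 / deriv ξ₀ t
    (1/4) * (1 - r^4 * (1 + r^3) ^ (-(7:ℝ)/3)) ≤ ((f r)^2).re ∧
    (η₀/2) * r^2 * (1 + r^3) ^ (-(7:ℝ)/6) ≤ ((f r)^2).im := by
  intro ξ₀ f
  have hcube : 0 < 1 + r ^ 3 := by positivity
  set a := r ^ 2 * (1 + r ^ 3) ^ (-(7 : ℝ) / 6) with ha
  have ha₀ : 0 ≤ a := by positivity
  have ha₁ : a ≤ 1 := sq_mul_one_add_cube_rpow_le_one hr.le
  have hf : f r = (1 - ((η₀ * a : ℝ) : ℂ) * Complex.I)⁻¹ := by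
    show 1 / deriv ξ₀ r = _
    rw [(hasDerivAt_translation_deformation η₀ hcube.ne').deriv, one_div]
  have ha_sq : r ^ 4 * (1 + r ^ 3) ^ (-(7 : ℝ) / 3) = a ^ 2 := by
    rw [ha, mul_pow, ← rpow_natCast ((1 + r ^ 3) ^ _) 2, ← rpow_mul hcube.le,
      show -(7 : ℝ) / 6 * (2 : ℕ) = -(7 : ℝ) / 3 by norm_num]
    ring
  have hb : η₀ * a ≤ a := mul_le_of_le_one_left ha₀ hη₁.le
  obtain ⟨hre, him⟩ := Complex.le_re_im_inv_one_sub_mul_I_sq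
    (b := η₀ * a) (by positivity) (hb.trans ha₁)
  rw [hf, ha_sq]
  constructor
  · have hb_sq : (η₀ * a) ^ 2 ≤ a ^ 2 := by gcongr
    calc 1 / 4 * (1 - a ^ 2) ≤ (1 - (η₀ * a) ^ 2) / 4 := by linarith
      _ ≤ _ := hre
  · calc η₀ / 2 * r ^ 2 * (1 + r ^ 3) ^ (-(7 : ℝ) / 6) = η₀ * a / 2 := by ring
      _ ≤ _ := him
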